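/- Let A be a discrete valuation ring with maximal ideal (t), quotient field K, valuation v_t on K, and residue field F = A/(t) of characteristic 2. Let φ be an anisotropic quadratic form over F of dimension n, and let φ_l be a quadratic form over A whose reduction modulo (t) is isometric to φ. Then for every nonzero vector ξ = (ξ₁,…,ξₙ) ∈ Kⁿ one has φ_l(ξ) ≠ 0 and v_t(φ_l(ξ)) is even. -/

import Mathlib

/-!
Background definitions for quadratic forms over fields of characteristic 2,
following the conventions of "Isotropy of quadratic forms over function fields
in characteristic 2".  A quadratic form of dimension `n` over a commutative ring
`R` is represented by a coefficient matrix `c : ι → ι → R` (`ι` a finite index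
type), the associated quadratic map being `x ↦ ∑ i j, c i j * x i * x j`; every
quadratic form on a finite-dimensional vector space (a map satisfying
`φ(av) = a²φ(v)` whose polar form is bilinear) arises this way.
-/

open scoped BigOperators Pointwise Classical

namespace QF2

variable {R S : Type*} [CommRing R] [CommRing S] {ι κ : Type} [Fintype ι] [Fintype κ]

/-- The value at `x` of the quadratic form with coefficient matrix `c`, namely
`∑ i j, c i j * x i * x j`. -/
def eval (c : ι → ι → R) (x : ι → R) : R := ∑ i, ∑ j, c i j * x i * x j

/-- The polar form `b(x,y) = q(x+y) - q(x) - q(y)` of the quadratic form `c`. -/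
def polar (c : ι → ι → R) (x y : ι → R) : R := ∑ i, ∑ j, c i j * (x i * y j + x j * y i)

/-- A quadratic form is isotropic if it vanishes on a nonzero vector. -/
def IsIsotropic (c : ι → ι → R) : Prop := ∃ x : ι → R, x ≠ 0 ∧ eval c x = 0

/-- Anisotropic: not isotropic. -/
abbrev IsAnisotropic (c : ι → ι → R) : Prop := ¬ IsIsotropic c

/-- Base change of a quadratic form along a ring homomorphism. -/
def map (σ : R →+* S) (c : ι → ι → R) : ι → ι → S := fun i j => σ (c i j)

/-- Quasilinear (totally singular): the polar form vanishes identically. -/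
def IsQuasilinear (c : ι → ι → R) : Prop := ∀ x y : ι → R, polar c x y = 0

/-- Nondefective (quasilinear index `i_d = 0`): no nonzero vector of the radical of the
polar form is isotropic. -/
def IsNondefective (c : ι → ι → R) : Prop :=
  ∀ x : ι → R, (∀ y, polar c x y = 0) → eval c x = 0 → x = 0

/-- `d` is isometric to `c`. -/
def Isometric (c : ι → ι → R) (d : κ → κ → R) : Prop :=
  ∃ g : (κ → R) ≃ₗ[R] (ι → R), ∀ x, eval d x = eval c (g x)

/-- `D_R^*(c)`: the set of nonzero represented elements. -/
def reps (c : ι → ι → R) : Set R := {a | a ≠ 0 ∧ ∃ x : ι → R, eval c x = a}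

/-- `D_R^*(c)^m`: products of `m` nonzero represented elements. -/
def repsPow (c : ι → ι → R) (m : ℕ) : Set R :=
  {a | ∃ v : Fin m → R, (∀ k, v k ∈ reps c) ∧ a = ∏ k, v k}

/-- The multiplicative subgroup of `F^*` generated by a set `s` of nonzero elements,
realized as a subset of `F` (products of elements of `s` and their inverses). -/
def genBy {F : Type*} [Field F] (s : Set F) : Set F :=
  ↑(Submonoid.closure (s ∪ Inv.inv '' s))

/-- `⟨D_F^*(c)⟩`: the subgroup generated by the nonzero represented elements. -/
def genGroup {F : Type*} [Field F] (c : ι → ι → F) : Set F := genBy (reps c)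

/-- `⟨D_F^*(c)²⟩`. -/
def genGroup2 {F : Type*} [Field F] (c : ι → ι → F) : Set F := genBy (repsPow c 2)

/-- The scaled quadratic form `a·c`. -/
def smulQF (a : R) (c : ι → ι → R) : ι → ι → R := fun i j => a * c i j

/-- Orthogonal sum of two quadratic forms. -/
def orthSum (c : ι → ι → R) (d : κ → κ → R) : (ι ⊕ κ) → (ι ⊕ κ) → R
  | Sum.inl i, Sum.inl j => c i j
  | Sum.inr i, Sum.inr j => d i j
  | _, _ => 0

lemma eval_add (c : ι → ι → R) (x y : ι → R) :
    eval c (x + y) = eval c x + eval c y + polar c x y := by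
  unfold eval polar
  rw [← Finset.sum_add_distrib, ← Finset.sum_add_distrib]
  refine Finset.sum_congr rfl fun i _ => ?_
  rw [← Finset.sum_add_distrib, ← Finset.sum_add_distrib]
  refine Finset.sum_congr rfl fun j _ => ?_
  simp only [Pi.add_apply]; ring

lemma polar_add_left (c : ι → ι → R) (x x' y : ι → R) :
    polar c (x + x') y = polar c x y + polar c x' y := by
  unfold polar
  rw [← Finset.sum_add_distrib]
  refine Finset.sum_congr rfl fun i _ => ?_
  rw [← Finset.sum_add_distrib]
  refine Finset.sum_congr rfl fun j _ => ?_
  simp only [Pi.add_apply]; ring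

lemma polar_smul_left (c : ι → ι → R) (a : R) (x y : ι → R) :
    polar c (a • x) y = a * polar c x y := by
  unfold polar
  rw [Finset.mul_sum]
  refine Finset.sum_congr rfl fun i _ => ?_
  rw [Finset.mul_sum]
  refine Finset.sum_congr rfl fun j _ => ?_
  simp only [Pi.smul_apply, smul_eq_mul]; ring

lemma eval_smul (c : ι → ι → R) (a : R) (x : ι → R) :
    eval c (a • x) = a ^ 2 * eval c x := by
  unfold eval
  rw [Finset.mul_sum]
  refine Finset.sum_congr rfl fun i _ => ?_
  rw [Finset.mul_sum]
  refine Finset.sum_congr rfl fun j _ => ?_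
  simp only [Pi.smul_apply, smul_eq_mul]; ring

/-- The defect of a quadratic form: the submodule of isotropic vectors lying in the
radical of the polar form. -/
def defectSubmodule (c : ι → ι → R) : Submodule R (ι → R) where
  carrier := {x | (∀ y, polar c x y = 0) ∧ eval c x = 0}
  zero_mem' := by
    constructor
    · intro y; unfold polar; simp
    · unfold eval; simp
  add_mem' := by
    rintro x x' ⟨hx1, hx2⟩ ⟨hx1', hx2'⟩
    refine ⟨fun y => ?_, ?_⟩
    · rw [polar_add_left, hx1 y, hx1' y, add_zero]
    · rw [eval_add, hx2, hx2', hx1 x', add_zero, add_zero]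
  smul_mem' := by
    rintro a x ⟨hx1, hx2⟩
    refine ⟨fun y => ?_, ?_⟩
    · rw [polar_smul_left, hx1 y, mul_zero]
    · rw [eval_smul, hx2, mul_zero]

/-- The quasilinear index (defect) `i_d` of a quadratic form. -/
noncomputable def defectIndex (c : ι → ι → R) : ℕ :=
  Module.finrank R (defectSubmodule c)

/-- The total isotropy index `i_t`: the dimension of a maximal totally isotropic
subspace. -/
noncomputable def totalIndex (c : ι → ι → R) : ℕ :=
  sSup {m | ∃ W : Submodule R (ι → R), (∀ x ∈ W, eval c x = 0) ∧ Module.finrank R W = m}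

/-- The Witt index `i_W = i_t - i_d`. -/
noncomputable def wittIndex (c : ι → ι → R) : ℕ := totalIndex c - defectIndex c

variable {F : Type u} [Field F]

/-- The homogeneous quadratic polynomial `φ(X_1, …, X_n)` attached to a quadratic form. -/
noncomputable def poly (c : ι → ι → F) : MvPolynomial ι F :=
  ∑ i, ∑ j, MvPolynomial.C (c i j) * (MvPolynomial.X i * MvPolynomial.X j)

/-- The canonical map from `F` to the total fraction ring of `A/(f)`; when `f` is
irreducible, the target is the function field `F(f)`. -/
noncomputable def ffHom {A : Type*} [CommRing A] (σ : F →+* A) (f : A) :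
    F →+* FractionRing (A ⧸ Ideal.span {f}) :=
  (algebraMap (A ⧸ Ideal.span {f}) (FractionRing (A ⧸ Ideal.span {f}))).comp
    ((Ideal.Quotient.mk (Ideal.span {f})).comp σ)

/-- The canonical map from `R` into (the total fraction ring of) `R[X_i : i ∈ κ]`;
for a field this is the inclusion into the rational function field `F(X_i : i ∈ κ)`. -/
noncomputable def ratHom (κ : Type) (R : Type*) [CommRing R] :
    R →+* FractionRing (MvPolynomial κ R) :=
  (algebraMap (MvPolynomial κ R) (FractionRing (MvPolynomial κ R))).comp MvPolynomial.C

/-- The canonical map from `F` into the rational function field `F(X)`. -/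
noncomputable def ratHom1 (F : Type u) [Field F] : F →+* FractionRing (Polynomial F) :=
  (algebraMap (Polynomial F) (FractionRing (Polynomial F))).comp Polynomial.C

/-- `φ_{F(ψ)}` is isotropic, where `F(ψ)` is the function field of the quadratic form `ψ`.
When the polynomial of `ψ` is irreducible this is the quotient field of `F[X]/(ψ(X))`;
otherwise (`ψ ≅ ⟨a⟩`, `ψ ≅ ℍ`, or degenerate defective cases) `F(ψ)` is a purely
transcendental extension of `F`, over which isotropy is equivalent to isotropy over `F`. -/
def IsotropicOverFunField (c : ι → ι → F) (d : κ → κ → F) : Prop :=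
  (Irreducible (poly d) → IsIsotropic (map (ffHom MvPolynomial.C (poly d)) c)) ∧
  (¬ Irreducible (poly d) → IsIsotropic c)

/-- Stable birational equivalence of (nondefective) quadratic forms:
`φ_{F(ψ)}` and `ψ_{F(φ)}` are both isotropic. -/
def StbEquiv (c : ι → ι → F) (d : κ → κ → F) : Prop :=
  IsotropicOverFunField c d ∧ IsotropicOverFunField d c

/-- The leading coefficient of a multivariate polynomial with respect to the
lexicographic ordering on monomials. -/
noncomputable def lexLC {l : ℕ} {F : Type*} [CommSemiring F] (f : MvPolynomial (Fin l) F) : F :=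
  if h : f = 0 then 0
  else f.coeff (ofLex ((f.support.image (toLex : (Fin l →₀ ℕ) → Lex (Fin l →₀ ℕ))).max'
    (Finset.Nonempty.image (MvPolynomial.support_nonempty.mpr h) _)))

/-- The coefficient matrix of the tensor product `π ⊗ φ` of the bilinear Pfister form
`π = ⟨⟨a 1, …, a n⟩⟩_b` with the quadratic form `c` (with respect to the standard basis,
`π ⊗ φ ≅ ⊥_{S ⊆ {1,…,n}} (∏_{i ∈ S} a i) φ`). -/
def pfisterMul {n : ℕ} (a : Fin n → R) (c : ι → ι → R) :
    ((Fin n → Bool) × ι) → ((Fin n → Bool) × ι) → R :=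
  fun p q =>
    if p.1 = q.1 then (∏ i, if p.1 i then a i else 1) * c p.2 q.2 else 0

/-!
Write `ξ = t ^ k • x` with `x` integral and primitive, i.e. some coordinate of `x` a unit
(clear denominators, then divide by the gcd `t ^ d` of the coordinates). Then
`φl(ξ) = t ^ (2k) φl(x)`, and `φl(x)` is a unit: its residue is the value of the anisotropic
reduction of `φl` at the nonzero vector `x mod t`.
-/

lemma eval_map (σ : R →+* S) (c : ι → ι → R) (x : ι → R) :
    eval (map σ c) (σ ∘ x) = σ (eval c x) := by
  simp [eval, map, map_sum, map_mul]

lemma Isometric.isAnisotropic {c : ι → ι → R} {d : κ → κ → R} (h : Isometric c d)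
    (hc : IsAnisotropic c) : IsAnisotropic d := by
  rintro ⟨x, hx, hdx⟩
  obtain ⟨g, hg⟩ := h
  exact hc ⟨g x, (map_ne_zero_iff g g.injective).mpr hx, hg x ▸ hdx⟩

open IsLocalRing in
lemma isUnit_eval_of_isAnisotropic_map_residue {A : Type*} [CommRing A] [IsLocalRing A]
    {c : ι → ι → A} (hc : IsAnisotropic (map (residue A) c)) {x : ι → A}
    (hx : ∃ i, IsUnit (x i)) : IsUnit (eval c x) := by
  rw [← residue_ne_zero_iff_isUnit, ← eval_map]
  obtain ⟨i, hi⟩ := hx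
  exact fun h => hc ⟨_, fun h0 => (residue_ne_zero_iff_isUnit _).mpr hi (congrFun h0 i), h⟩

section IsDiscreteValuationRing

variable {A : Type*} [CommRing A] [IsDomain A] [IsDiscreteValuationRing A] {t : A}

lemma exists_eq_pow_smul_of_ne_zero (ht : Irreducible t) {c : ι → A} (hc : c ≠ 0) :
    ∃ (d : ℕ) (x : ι → A), (∃ i, IsUnit (x i)) ∧ c = t ^ d • x := by
  have hspan : Ideal.span (Set.range c) ≠ ⊥ := by
    rw [Ne, Ideal.span_eq_bot, Set.forall_mem_range]
    exact fun h => hc (funext h)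
  obtain ⟨d, hd⟩ := IsDiscreteValuationRing.ideal_eq_span_pow_irreducible hspan ht
  have hdvd : ∀ i, t ^ d ∣ c i :=
    fun i => Ideal.mem_span_singleton.mp (hd ▸ Ideal.subset_span ⟨i, rfl⟩)
  choose x hx using hdvd
  refine ⟨d, x, ?_, funext hx⟩
  obtain ⟨a, ha⟩ := Ideal.mem_span_range_iff_exists_fun.mp
    (hd ▸ Ideal.mem_span_singleton_self (t ^ d))
  have hsum : ∑ i, a i * x i = 1 := by
    refine mul_left_cancel₀ (pow_ne_zero d ht.ne_zero) ?_
    calc t ^ d * ∑ i, a i * x i = ∑ i, a i * c i := by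
          rw [Finset.mul_sum]
          exact Finset.sum_congr rfl fun i _ => by rw [hx]; ring
      _ = t ^ d * 1 := by rw [ha, mul_one]
  by_contra! hx
  have hmem : ∑ i, a i * x i ∈ IsLocalRing.maximalIdeal A :=
    Ideal.sum_mem _ fun i _ => Ideal.mul_mem_left _ _ ((IsLocalRing.mem_maximalIdeal _).mpr (hx i))
  rw [hsum] at hmem
  exact one_notMem_nonunits ((IsLocalRing.mem_maximalIdeal _).mp hmem)

lemma exists_eq_zpow_smul_of_ne_zero {K : Type*} [Field K] [Algebra A K] [IsFractionRing A K]
    (ht : Irreducible t) {ξ : ι → K} (hξ : ξ ≠ 0) :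
    ∃ (k : ℤ) (x : ι → A), (∃ i, IsUnit (x i)) ∧
      ξ = algebraMap A K t ^ k • (algebraMap A K ∘ x) := by
  obtain ⟨b, hb⟩ := IsLocalization.exist_integer_multiples_of_finite (nonZeroDivisors A) ξ
  choose c hc using hb
  have hb0 : (b : A) ≠ 0 := nonZeroDivisors.coe_ne_zero b
  have hf : Function.Injective (algebraMap A K) := IsFractionRing.injective A K
  have hc0 : c ≠ 0 := by
    rintro rfl
    exact hξ (funext fun i => by simpa [hb0] using (hc i).symm)
  obtain ⟨d, y, ⟨i, hi⟩, rfl⟩ := exists_eq_pow_smul_of_ne_zero ht hc0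
  obtain ⟨e, u, hu⟩ := IsDiscreteValuationRing.eq_unit_mul_pow_irreducible hb0 ht
  refine ⟨d - e, fun j => ↑u⁻¹ * y j, ⟨i, u⁻¹.isUnit.mul hi⟩, funext fun j => ?_⟩
  have hj := hc j
  have hft : algebraMap A K t ≠ 0 := (map_ne_zero_iff _ hf).mpr ht.ne_zero
  have hfu : algebraMap A K u ≠ 0 := (map_ne_zero_iff _ hf).mpr u.ne_zero
  simp only [Pi.smul_apply, smul_eq_mul, Algebra.smul_def, hu, Function.comp_apply, map_mul,
    map_pow] at hj ⊢
  rw [zpow_sub₀ hft, zpow_natCast, zpow_natCast, map_units_inv]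
  field_simp
  rw [hj]
  ring

end IsDiscreteValuationRing

theorem stmt1_general {A : Type*} [CommRing A] [IsDomain A] [IsDiscreteValuationRing A]
    (t : A) (ht : IsLocalRing.maximalIdeal A = Ideal.span {t})
    {ι : Type} [Fintype ι]
    (φ : ι → ι → IsLocalRing.ResidueField A) (φl : ι → ι → A)
    (hred : Isometric φ (map (IsLocalRing.residue A) φl))
    (han : IsAnisotropic φ)
    (ξ : ι → FractionRing A) (hξ : ξ ≠ 0) :
    eval (map (algebraMap A (FractionRing A)) φl) ξ ≠ 0 ∧
      ∃ (u : Aˣ) (k : ℤ),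
        eval (map (algebraMap A (FractionRing A)) φl) ξ =
          algebraMap A (FractionRing A) ↑u * algebraMap A (FractionRing A) t ^ (2 * k) := by
  set f := algebraMap A (FractionRing A)
  have hirr : Irreducible t := (IsDiscreteValuationRing.irreducible_iff_uniformizer t).mpr ht
  obtain ⟨k, x, hx, rfl⟩ := exists_eq_zpow_smul_of_ne_zero hirr hξ
  obtain ⟨u, hu⟩ := isUnit_eval_of_isAnisotropic_map_residue (hred.isAnisotropic han) hx
  have hval : eval (map f φl) (f t ^ k • (f ∘ x)) = f u * f t ^ (2 * k) := by
    rw [eval_smul, eval_map, ← hu, mul_comm (2 : ℤ), zpow_mul, zpow_two, sq, mul_comm]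
  have hf : Function.Injective f := IsFractionRing.injective A _
  refine ⟨?_, u, k, hval⟩
  rw [hval]
  exact mul_ne_zero ((map_ne_zero_iff f hf).mpr u.ne_zero)
    (zpow_ne_zero _ ((map_ne_zero_iff f hf).mpr hirr.ne_zero))

/-- Let `A` be a discrete valuation ring with maximal ideal `(t)`,
quotient field `K`, and residue field `F` of characteristic 2.  Let `φ` be an
anisotropic quadratic form over `F` and `φl` a quadratic form over `A` whose reduction
modulo `(t)` is isometric to `φ`.  Then for every nonzero vector `ξ` over `K` we have
`φl(ξ) ≠ 0` and the `t`-adic valuation `v_t(φl(ξ))` is even, i.e. `φl(ξ) = u·t^(2k)`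
for a unit `u` of `A` and some `k : ℤ`. -/
theorem stmt1 {A : Type*} [CommRing A] [IsDomain A] [IsDiscreteValuationRing A]
    [CharP (IsLocalRing.ResidueField A) 2]
    (t : A) (ht : IsLocalRing.maximalIdeal A = Ideal.span {t})
    {ι : Type} [Fintype ι]
    (φ : ι → ι → IsLocalRing.ResidueField A) (φl : ι → ι → A)
    (hred : Isometric φ (map (IsLocalRing.residue A) φl))
    (han : IsAnisotropic φ)
    (ξ : ι → FractionRing A) (hξ : ξ ≠ 0) :
    eval (map (algebraMap A (FractionRing A)) φl) ξ ≠ 0 ∧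
      ∃ (u : Aˣ) (k : ℤ),
        eval (map (algebraMap A (FractionRing A)) φl) ξ =
          algebraMap A (FractionRing A) ↑u * algebraMap A (FractionRing A) t ^ (2 * k) :=
  stmt1_general t ht φ φl hred han ξ hξ

end QF2
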